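/- Let K be a nonarchimedean valued field of mixed characteristic (0,p). Let f : U → O_K be a C^r function on an open set U ⊆ O_K, c ∈ O_K, M a positive integer, and suppose that for all x ∈ U and all 0 ≤ i ≤ r, |f^{(i)}(x)| ≤ 1/(|M|^i·|x - c|^i), and that f satisfies order r-1 Taylor approximation on each ball pM-next to c (i.e., |f(x) - T^{<r}_{f,y}(x)| ≤ |f^{(r)}(y)|·|x-y|^r / |r!| bounded appropriately, so that |f(x) - T^{<r}_{f,y}(x)| ≤ |x - y|^r after rescaling). Let B ⊆ U be a ball pM-next to c, a ∈ B, and s_a(x) = (a-c)(1 + pMx) + c the scaling map. Then g = f ∘ s_a : M_K → O_K satisfies |g^{(i)}(x)| ≤ |i!| for all x ∈ M_K and 0 ≤ i ≤ r. -/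

import Mathlib

section aux

variable {K : Type*} [NontriviallyNormedField K]

lemma aux_nat_norm_le_one (hna : ∀ x y : K, ‖x + y‖ ≤ max ‖x‖ ‖y‖) (n : ℕ) :
    ‖(n : K)‖ ≤ 1 := by
  induction n with
  | zero => simp
  | succ k ih =>
      push_cast
      calc ‖(k : K) + 1‖ ≤ max ‖(k : K)‖ ‖(1 : K)‖ := hna _ _
        _ ≤ 1 := by simp [ih]

lemma aux_int_norm_le_one (hna : ∀ x y : K, ‖x + y‖ ≤ max ‖x‖ ‖y‖) (n : ℤ) :
    ‖(n : K)‖ ≤ 1 := by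
  rcases le_or_gt 0 n with h | h
  · lift n to ℕ using h
    exact_mod_cast aux_nat_norm_le_one hna n
  · rw [show (n : K) = -((-n : ℤ) : K) by push_cast; ring, norm_neg]
    have : 0 ≤ -n := by omega
    lift -n to ℕ using this with m hm
    exact_mod_cast aux_nat_norm_le_one hna m

lemma aux_coprime_norm_one [CharZero K] (hna : ∀ x y : K, ‖x + y‖ ≤ max ‖x‖ ‖y‖)
    {p : ℕ} (hp : p.Prime) (hpv : ‖(p : K)‖ < 1) {n : ℕ} (hn : ¬ p ∣ n) :
    ‖(n : K)‖ = 1 := by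
  have hco : Nat.Coprime p n := (Nat.Prime.coprime_iff_not_dvd hp).mpr hn
  have hbez : (1 : ℤ) = p * Nat.gcdA p n + n * Nat.gcdB p n := by
    have := Nat.gcd_eq_gcd_ab p n
    rwa [hco, Nat.cast_one] at this
  have hK : (1 : K) = (p : K) * ((Nat.gcdA p n : ℤ) : K) + (n : K) * ((Nat.gcdB p n : ℤ) : K) := by
    exact_mod_cast congrArg (fun z : ℤ => (z : K)) hbez
  have h1 : (1 : ℝ) ≤ max ‖(p : K) * ((Nat.gcdA p n : ℤ) : K)‖ ‖(n : K) * ((Nat.gcdB p n : ℤ) : K)‖ := by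
    calc (1:ℝ) = ‖(1 : K)‖ := by simp
      _ = ‖(p : K) * ((Nat.gcdA p n : ℤ) : K) + (n : K) * ((Nat.gcdB p n : ℤ) : K)‖ := by rw [← hK]
      _ ≤ _ := hna _ _
  have hpa : ‖(p : K) * ((Nat.gcdA p n : ℤ) : K)‖ < 1 := by
    rw [norm_mul]
    calc ‖(p : K)‖ * ‖((Nat.gcdA p n : ℤ) : K)‖ ≤ ‖(p : K)‖ * 1 :=
          mul_le_mul_of_nonneg_left (aux_int_norm_le_one hna _) (norm_nonneg _)
      _ < 1 := by simpa using hpv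
  have hnb : (1 : ℝ) ≤ ‖(n : K) * ((Nat.gcdB p n : ℤ) : K)‖ := by
    rcases max_cases ‖(p : K) * ((Nat.gcdA p n : ℤ) : K)‖ ‖(n : K) * ((Nat.gcdB p n : ℤ) : K)‖ with
      ⟨h, _⟩ | ⟨h, _⟩
    · rw [h] at h1; linarith
    · rwa [h] at h1
  rw [norm_mul] at hnb
  have h2 : ‖(n : K)‖ ≤ 1 := aux_nat_norm_le_one hna n
  have h3 : ‖((Nat.gcdB p n : ℤ) : K)‖ ≤ 1 := aux_int_norm_le_one hna _
  nlinarith [norm_nonneg ((n : K)), norm_nonneg (((Nat.gcdB p n : ℤ) : K))]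

/-- `‖p‖^i ≤ ‖i!‖` in residue characteristic `p`. -/
lemma aux_pow_le_norm_factorial [CharZero K] (hna : ∀ x y : K, ‖x + y‖ ≤ max ‖x‖ ‖y‖)
    {p : ℕ} (hp : p.Prime) (hpv : ‖(p : K)‖ < 1) (i : ℕ) :
    ‖(p : K)‖ ^ i ≤ ‖((Nat.factorial i : ℕ) : K)‖ := by
  haveI : Fact p.Prime := ⟨hp⟩
  set n := Nat.factorial i with hn
  have hn0 : n ≠ 0 := Nat.factorial_ne_zero i
  set v := n.factorization p with hv
  have hsplit : p ^ v * (n / p ^ v) = n := Nat.ordProj_mul_ordCompl_eq_self n p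
  have hnd : ¬ p ∣ (n / p ^ v) := Nat.not_dvd_ordCompl hp hn0
  have hnormn : ‖(n : K)‖ = ‖(p : K)‖ ^ v := by
    have : ((n : ℕ) : K) = ((p : K) ^ v) * ((n / p ^ v : ℕ) : K) := by
      conv_lhs => rw [← hsplit]
      push_cast
      ring
    rw [this, norm_mul, norm_pow, aux_coprime_norm_one hna hp hpv hnd, mul_one]
  have hvle : v ≤ i := by
    have hleg : (p - 1) * padicValNat p (Nat.factorial i) = i - (p.digits i).sum :=
      sub_one_mul_padicValNat_factorial i
    have hfac : v = padicValNat p n := Nat.factorization_def n hp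
    have hp2 : 2 ≤ p := hp.two_le
    have : (p - 1) * v = i - (p.digits i).sum := by rw [hfac, hn]; exact hleg
    have h1 : v ≤ (p - 1) * v := Nat.le_mul_of_pos_left v (by omega)
    omega
  rw [hnormn]
  exact pow_le_pow_of_le_one (norm_nonneg _) hpv.le hvle

lemma aux_one_add_small (hna : ∀ x y : K, ‖x + y‖ ≤ max ‖x‖ ‖y‖)
    {u : K} (hu : ‖u‖ < 1) : ‖1 + u‖ = 1 := by
  have h1 : ‖1 + u‖ ≤ 1 := by
    calc ‖1 + u‖ ≤ max ‖(1:K)‖ ‖u‖ := hna _ _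
      _ ≤ 1 := by simp [hu.le]
  have h2 : (1:ℝ) ≤ max ‖1 + u‖ ‖u‖ := by
    calc (1:ℝ) = ‖(1:K)‖ := by simp
      _ = ‖(1 + u) + (-u)‖ := by ring_nf
      _ ≤ max ‖1 + u‖ ‖(-u)‖ := hna _ _
      _ = max ‖1 + u‖ ‖u‖ := by rw [norm_neg]
  rcases max_cases ‖1 + u‖ ‖u‖ with ⟨h, _⟩ | ⟨h, _⟩
  · rw [h] at h2; linarith
  · rw [h] at h2; linarith

end aux

/-- If `f` is an `r`-parametrizing map with centre `c` and integer `M`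
(derivative bounds `|f⁽ⁱ⁾(x)| ≤ 1/(|M|^i |x-c|^i)` and order `r-1` Taylor
approximation on balls `pM`-next to `c`), `B ⊆ U` is a ball `pM`-next to `c`
and `a ∈ B`, then `g = f ∘ s_a` satisfies `|g⁽ⁱ⁾(x)| ≤ |i!|` on `M_K` for
`0 ≤ i ≤ r`. -/
theorem stmt_7 {K : Type*} [NontriviallyNormedField K] [CharZero K]
    (hna : ∀ x y : K, ‖x + y‖ ≤ max ‖x‖ ‖y‖)
    (p : ℕ) (hp : p.Prime) (hpv : ‖(p : K)‖ < 1)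
    (r : ℕ) (hr : 1 ≤ r) (M : ℕ) (hM : 0 < M)
    (U : Set K) (hU : IsOpen U) (hUO : U ⊆ {x : K | ‖x‖ ≤ 1})
    (f : K → K) (hfO : ∀ x ∈ U, ‖f x‖ ≤ 1)
    (hf : ContDiffOn K r f U)
    (c : K) (hcO : ‖c‖ ≤ 1)
    (hder : ∀ x ∈ U, ∀ i ≤ r,
      ‖iteratedDeriv i f x‖ * (‖((M : ℕ) : K)‖ ^ i * ‖x - c‖ ^ i) ≤ 1)
    (hTaylor : ∀ y ∈ U, ∀ x ∈ U, ‖x - y‖ < ‖((p * M : ℕ) : K)‖ * ‖x - c‖ →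
      ‖f x - ∑ i ∈ Finset.range r, iteratedDeriv i f y / ((Nat.factorial i : ℕ) : K) * (x - y) ^ i‖
        ≤ ‖x - y‖ ^ r)
    (a : K) (ha : a ∈ U) (hac : a ≠ c)
    (hball : {y : K | ‖y - a‖ < ‖((p * M : ℕ) : K)‖ * ‖a - c‖} ⊆ U) :
    ∀ x : K, ‖x‖ < 1 → ∀ i ≤ r,
      ‖iteratedDeriv i (fun t => f ((a - c) * (1 + ((p * M : ℕ) : K) * t) + c)) x‖
        ≤ ‖((Nat.factorial i : ℕ) : K)‖ := by
  set q : K := ((p * M : ℕ) : K) with hq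
  set b : K := (a - c) * q with hb
  set s : K → K := fun t => a + b * t with hs
  have hgfun : (fun t => f ((a - c) * (1 + q * t) + c)) = fun t => f (s t) := by
    funext t; congr 1; simp only [hs, hb]; ring
  have hq0 : q ≠ 0 := by
    have : ((p * M : ℕ) : K) ≠ 0 := Nat.cast_ne_zero.mpr (Nat.mul_ne_zero hp.pos.ne' hM.ne')
    simpa [hq] using this
  have hac0 : a - c ≠ 0 := sub_ne_zero.mpr hac
  have hb0 : b ≠ 0 := mul_ne_zero hac0 hq0
  have hbnorm : ‖b‖ = ‖a - c‖ * ‖q‖ := by rw [hb, norm_mul]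
  -- membership of s x in U for ‖x‖ < 1
  have hmem : ∀ x : K, ‖x‖ < 1 → s x ∈ U := by
    intro x hx
    apply hball
    have : ‖s x - a‖ = ‖b‖ * ‖x‖ := by simp [hs, norm_mul]
    simp only [Set.mem_setOf_eq, this]
    calc ‖b‖ * ‖x‖ < ‖b‖ * 1 := by
          apply mul_lt_mul_of_pos_left hx
          exact norm_pos_iff.mpr hb0
      _ = ‖q‖ * ‖a - c‖ := by rw [mul_one, hbnorm, mul_comm]
  -- ‖s x - c‖ = ‖a - c‖
  have hsc : ∀ x : K, ‖x‖ < 1 → ‖s x - c‖ = ‖a - c‖ := by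
    intro x hx
    have h1 : s x - c = (a - c) * (1 + q * x) := by simp only [hs, hb]; ring
    have hqle : ‖q‖ ≤ 1 := by
      rw [hq, Nat.cast_mul, norm_mul]
      calc ‖(p : K)‖ * ‖((M : ℕ) : K)‖ ≤ 1 * 1 :=
        mul_le_mul hpv.le (aux_nat_norm_le_one hna M) (norm_nonneg _) zero_le_one
      _ = 1 := one_mul 1
    have hsmall : ‖q * x‖ < 1 := by
      rw [norm_mul]
      calc ‖q‖ * ‖x‖ ≤ 1 * ‖x‖ := mul_le_mul_of_nonneg_right hqle (norm_nonneg _)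
        _ = ‖x‖ := one_mul _
        _ < 1 := hx
    rw [h1, norm_mul, aux_one_add_small hna hsmall, mul_one]
  -- iteratedDeriv within = global on the open set U
  have hwithin : ∀ (i : ℕ), ∀ z ∈ U, iteratedDerivWithin i f U z = iteratedDeriv i f z := by
    intro i z hz
    rw [iteratedDerivWithin, iteratedDeriv, iteratedFDerivWithin_of_isOpen i hU hz]
  -- differentiability of iterated derivatives of f inside U
  have hdiff : ∀ i < r, ∀ z ∈ U, HasDerivAt (iteratedDeriv i f)
      (iteratedDeriv (i + 1) f z) z := by
    intro i hi z hz
    have hud : UniqueDiffOn K U := hU.uniqueDiffOn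
    have h1 : DifferentiableWithinAt K (iteratedDerivWithin i f U) U z :=
      hf.differentiableOn_iteratedDerivWithin (by exact_mod_cast hi) hud z hz
    have h2 : DifferentiableAt K (iteratedDerivWithin i f U) z :=
      h1.differentiableAt (hU.mem_nhds hz)
    have heq : iteratedDerivWithin i f U =ᶠ[nhds z] iteratedDeriv i f :=
      Filter.eventuallyEq_of_mem (hU.mem_nhds hz) (fun w hw => hwithin i w hw)
    have h3 : DifferentiableAt K (iteratedDeriv i f) z := h2.congr_of_eventuallyEq heq.symm
    have h4 := h3.hasDerivAt
    rwa [← iteratedDeriv_succ] at h4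
  -- the key formula: iterated derivatives of g
  set V : Set K := Metric.ball (0 : K) 1 with hV
  have hVmem : ∀ x : K, ‖x‖ < 1 → x ∈ V := by
    intro x hx; simpa [hV, Metric.mem_ball, dist_eq_norm] using hx
  have key : ∀ i ≤ r, ∀ x : K, ‖x‖ < 1 →
      iteratedDeriv i (fun t => f (s t)) x = b ^ i * iteratedDeriv i f (s x) := by
    intro i
    induction i with
    | zero => intro _ x _; simp
    | succ i ih =>
        intro hir x hx
        have hi : i < r := Nat.lt_of_succ_le hir
        have heqV : Set.EqOn (iteratedDeriv i fun t => f (s t))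
            (fun t => b ^ i * iteratedDeriv i f (s t)) V := by
          intro t ht
          have ht' : ‖t‖ < 1 := by simpa [hV, Metric.mem_ball, dist_eq_norm] using ht
          exact ih hi.le t ht'
        have heq : (iteratedDeriv i fun t => f (s t)) =ᶠ[nhds x]
            (fun t => b ^ i * iteratedDeriv i f (s t)) :=
          Filter.eventuallyEq_of_mem (Metric.isOpen_ball.mem_nhds (hVmem x hx)) heqV
        have hsx : HasDerivAt s b x := by
          simpa [hs] using ((hasDerivAt_id x).const_mul b).const_add a
        have hF : HasDerivAt (iteratedDeriv i f) (iteratedDeriv (i + 1) f (s x)) (s x) :=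
          hdiff i hi (s x) (hmem x hx)
        have hcomp : HasDerivAt (fun t => iteratedDeriv i f (s t))
            (iteratedDeriv (i + 1) f (s x) * b) x := hF.comp x hsx
        have hmul : HasDerivAt (fun t => b ^ i * iteratedDeriv i f (s t))
            (b ^ i * (iteratedDeriv (i + 1) f (s x) * b)) x := hcomp.const_mul _
        rw [iteratedDeriv_succ, heq.deriv_eq, hmul.deriv]
        ring
  -- conclude
  intro x hx i hi
  rw [hgfun, key i hi x hx, norm_mul, norm_pow, hbnorm]
  have hderi := hder (s x) (hmem x hx) i hi
  rw [hsc x hx] at hderi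
  have hqnorm : ‖q‖ = ‖(p : K)‖ * ‖((M : ℕ) : K)‖ := by
    rw [hq, Nat.cast_mul, norm_mul]
  have hstep : (‖a - c‖ * ‖q‖) ^ i * ‖iteratedDeriv i f (s x)‖
      = ‖(p : K)‖ ^ i * (‖iteratedDeriv i f (s x)‖ * (‖((M : ℕ) : K)‖ ^ i * ‖a - c‖ ^ i)) := by
    rw [hqnorm]; ring
  calc (‖a - c‖ * ‖q‖) ^ i * ‖iteratedDeriv i f (s x)‖
      = ‖(p : K)‖ ^ i * (‖iteratedDeriv i f (s x)‖ * (‖((M : ℕ) : K)‖ ^ i * ‖a - c‖ ^ i)) := hstep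
    _ ≤ ‖(p : K)‖ ^ i * 1 := by
        apply mul_le_mul_of_nonneg_left hderi (by positivity)
    _ = ‖(p : K)‖ ^ i := mul_one _
    _ ≤ ‖((Nat.factorial i : ℕ) : K)‖ := aux_pow_le_norm_factorial hna hp hpv i
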